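/- arXiv:2205.06674 — 5 statements merged into one kernel-verified Lean document; each statement's English description precedes it below -/
import Mathlib

section
/- Let E be a complex inner product space, S ⊆ E a complete linear subspace, and B ∈ E with orthogonal decomposition B = B∥ + B⊥ (B∥ ∈ S the orthogonal projection of B onto S, B⊥ = B − B∥). Let c ∈ ℝ satisfy 0 ≤ c < 1, assume B∥ ≠ 0 and c·‖B‖ ≤ ‖B∥‖, and set μ = 1 − (c/√(1 − c²))·(‖B⊥‖/‖B∥‖). Then the infimum over A ∈ S of min{‖A‖, ‖B‖}·c + ‖A − B‖ equals min{ ‖(μ − 1)·B∥ − B⊥‖ + c·μ·‖B∥‖, ‖B‖ }. -/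
/-!
Write `B = P + Q` with `P ∈ S`, `Q ⊥ S`, put `p = ‖P‖`, `q = ‖Q‖`, `s = √(1 - c²)`, and for
`A ∈ S` let `d = ‖A - P‖`. Then `min ‖A‖ ‖B‖ ≥ p - d` and `‖A - B‖ = √(d² + q²) ≥ c d + s q` by
Cauchy–Schwarz in `ℝ²`, so every value of the objective is at least `c p + s q`. Equality holds
at `A = μ P`, where `μ` is chosen so that `(d, q)` is parallel to `(c, s)`; the hypothesis
`c ‖B‖ ≤ p` is exactly what makes `μ ≥ 0`. Finally `c p + s q ≤ √(p² + q²) = ‖B‖`, again by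
Cauchy–Schwarz, so the outer `min` is attained by its first argument.
-/

lemma mul_add_mul_le_sqrt_sq_add_sq {c s : ℝ} (hcs : c ^ 2 + s ^ 2 = 1) (x y : ℝ) :
    c * x + s * y ≤ √(x ^ 2 + y ^ 2) :=
  Real.le_sqrt_of_sq_le (by nlinarith [sq_nonneg (s * x - c * y)])

section Orthogonal

variable {𝕜 E : Type*} [RCLike 𝕜] [NormedAddCommGroup E] [InnerProductSpace 𝕜 E]
  {S : Submodule 𝕜 E} {P Q : E} {c s : ℝ}

theorem norm_sub_eq_sqrt_of_mem_orthogonal (hP : P ∈ S) (hQ : Q ∈ Sᗮ) :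
    ‖P - Q‖ = √(‖P‖ ^ 2 + ‖Q‖ ^ 2) := by
  have h := norm_add_sq_eq_norm_sq_add_norm_sq_of_inner_eq_zero (𝕜 := 𝕜) P (-Q)
    (by rw [inner_neg_right, S.inner_right_of_mem_orthogonal hP hQ, neg_zero])
  rw [← sub_eq_add_neg, norm_neg, ← sq, ← sq, ← sq] at h
  rw [← h, Real.sqrt_sq (norm_nonneg _)]

theorem norm_add_eq_sqrt_of_mem_orthogonal (hP : P ∈ S) (hQ : Q ∈ Sᗮ) :
    ‖P + Q‖ = √(‖P‖ ^ 2 + ‖Q‖ ^ 2) := by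
  rw [← sub_neg_eq_add, norm_sub_eq_sqrt_of_mem_orthogonal hP (Sᗮ.neg_mem hQ), norm_neg]

theorem norm_le_norm_add_of_mem_orthogonal (hP : P ∈ S) (hQ : Q ∈ Sᗮ) : ‖P‖ ≤ ‖P + Q‖ := by
  rw [norm_add_eq_sqrt_of_mem_orthogonal hP hQ]
  exact Real.le_sqrt_of_sq_le (le_add_of_nonneg_right (sq_nonneg _))

theorem le_min_norm_mul_add_norm_sub (hP : P ∈ S) (hQ : Q ∈ Sᗮ) {A : E} (hA : A ∈ S)
    (hc : 0 ≤ c) (hcs : c ^ 2 + s ^ 2 = 1) :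
    c * ‖P‖ + s * ‖Q‖ ≤ min ‖A‖ ‖P + Q‖ * c + ‖A - (P + Q)‖ := by
  have hmin : ‖P‖ - ‖A - P‖ ≤ min ‖A‖ ‖P + Q‖ :=
    le_min (by linarith [norm_sub_norm_le P A, norm_sub_rev A P])
      (by linarith [norm_nonneg (A - P), norm_le_norm_add_of_mem_orthogonal hP hQ])
  have hdist : ‖A - (P + Q)‖ = √(‖A - P‖ ^ 2 + ‖Q‖ ^ 2) := by
    rw [← sub_sub]
    exact norm_sub_eq_sqrt_of_mem_orthogonal (S.sub_mem hA hP) hQ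
  rw [hdist]
  nlinarith [mul_le_mul_of_nonneg_left hmin hc, mul_add_mul_le_sqrt_sq_add_sq hcs ‖A - P‖ ‖Q‖]

theorem norm_smul_sub_of_mem_orthogonal [NormedSpace ℝ E] [IsScalarTower ℝ 𝕜 E]
    (hP : P ∈ S) (hQ : Q ∈ Sᗮ) (hs : 0 < s) (hcs : c ^ 2 + s ^ 2 = 1) {μ : ℝ}
    (hμ : (1 - μ) * ‖P‖ * s = c * ‖Q‖) :
    ‖(μ - 1) • P - Q‖ = ‖Q‖ / s := by
  rw [eq_div_iff hs.ne', ← sq_eq_sq₀ (by positivity) (norm_nonneg Q), mul_pow,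
    norm_sub_eq_sqrt_of_mem_orthogonal (S.smul_of_tower_mem (μ - 1) hP) hQ,
    Real.sq_sqrt (by positivity), norm_smul, Real.norm_eq_abs, mul_pow, sq_abs]
  linear_combination ((1 - μ) * ‖P‖ * s + c * ‖Q‖) * hμ + ‖Q‖ ^ 2 * hcs

theorem norm_smul_sub_add_mul_eq [NormedSpace ℝ E] [IsScalarTower ℝ 𝕜 E]
    (hP : P ∈ S) (hQ : Q ∈ Sᗮ) (hs : 0 < s) (hcs : c ^ 2 + s ^ 2 = 1) {μ : ℝ}
    (hμ : (1 - μ) * ‖P‖ * s = c * ‖Q‖) :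
    ‖(μ - 1) • P - Q‖ + c * μ * ‖P‖ = c * ‖P‖ + s * ‖Q‖ := by
  rw [norm_smul_sub_of_mem_orthogonal hP hQ hs hcs hμ, div_add' _ _ _ hs.ne', div_eq_iff hs.ne']
  linear_combination -c * hμ - ‖Q‖ * hcs

theorem mul_norm_le_mul_norm_of_mul_norm_add_le (hP : P ∈ S) (hQ : Q ∈ Sᗮ) (hc : 0 ≤ c)
    (hs : 0 ≤ s) (hcs : c ^ 2 + s ^ 2 = 1) (h : c * ‖P + Q‖ ≤ ‖P‖) :
    c * ‖Q‖ ≤ s * ‖P‖ := by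
  rw [norm_add_eq_sqrt_of_mem_orthogonal hP hQ] at h
  have hsq := pow_le_pow_left₀ (by positivity) h 2
  rw [mul_pow, Real.sq_sqrt (by positivity)] at hsq
  refine (pow_le_pow_iff_left₀ (by positivity) (by positivity) two_ne_zero).1 ?_
  nlinarith

theorem isLeast_min_norm_mul_add_norm_sub [NormedSpace ℝ E] [IsScalarTower ℝ 𝕜 E]
    (hP : P ∈ S) (hQ : Q ∈ Sᗮ) (hc : 0 ≤ c) (hs : 0 < s) (hcs : c ^ 2 + s ^ 2 = 1)
    {μ : ℝ} (hμ0 : 0 ≤ μ) (hμ1 : μ ≤ 1) (hμ : (1 - μ) * ‖P‖ * s = c * ‖Q‖) :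
    IsLeast (Set.range fun A : S ↦ min ‖(A : E)‖ ‖P + Q‖ * c + ‖(A : E) - (P + Q)‖)
      (c * ‖P‖ + s * ‖Q‖) := by
  refine ⟨⟨⟨μ • P, S.smul_of_tower_mem μ hP⟩, ?_⟩, ?_⟩
  · have hnorm : ‖μ • P‖ = μ * ‖P‖ := by rw [norm_smul, Real.norm_eq_abs, abs_of_nonneg hμ0]
    have hle : μ * ‖P‖ ≤ ‖P + Q‖ :=
      (mul_le_of_le_one_left (norm_nonneg P) hμ1).trans (norm_le_norm_add_of_mem_orthogonal hP hQ)
    have hdiff : μ • P - (P + Q) = (μ - 1) • P - Q := by rw [sub_smul, one_smul]; abel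
    dsimp only
    rw [hnorm, min_eq_left hle, hdiff, ← norm_smul_sub_add_mul_eq hP hQ hs hcs hμ]
    ring
  · rintro _ ⟨A, rfl⟩
    exact le_min_norm_mul_add_norm_sub hP hQ A.2 hc hcs

end Orthogonal

/-- Proposition A.1 (nondegenerate branch): with `Bpar` the orthogonal projection of `B`
onto the complete subspace `S`, `Bperp = B - Bpar`, `0 ≤ c < 1`, `Bpar ≠ 0` and
`c·‖B‖ ≤ ‖Bpar‖`, the infimum over `A ∈ S` of `min{‖A‖,‖B‖}·c + ‖A - B‖` equals
`min{‖(μ-1)·Bpar - Bperp‖ + c·μ·‖Bpar‖, ‖B‖}` with `μ = 1 - (c/√(1-c²))·(‖Bperp‖/‖Bpar‖)`. -/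
theorem flat_norm_distance_to_subspace_nondegenerate
    {E : Type*} [NormedAddCommGroup E] [InnerProductSpace ℂ E]
    (S : Submodule ℂ E) [CompleteSpace S] (B : E) (c : ℝ)
    (hc0 : 0 ≤ c) (hc1 : c < 1)
    (Bpar Bperp : E)
    (hpar : Bpar = (S.orthogonalProjectionOnto B : E))
    (hperp : Bperp = B - Bpar)
    (hBpar : Bpar ≠ 0)
    (hcB : c * ‖B‖ ≤ ‖Bpar‖)
    (μ : ℝ)
    (hμ : μ = 1 - (c / Real.sqrt (1 - c ^ 2)) * (‖Bperp‖ / ‖Bpar‖)) :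
    (⨅ A : S, (min ‖(A : E)‖ ‖B‖ * c + ‖(A : E) - B‖))
      = min (‖(μ - 1) • Bpar - Bperp‖ + c * μ * ‖Bpar‖) ‖B‖ := by
  have hc2 : 0 < 1 - c ^ 2 := by nlinarith
  set s := √(1 - c ^ 2)
  have hs : 0 < s := Real.sqrt_pos.2 hc2
  have hcs : c ^ 2 + s ^ 2 = 1 := by rw [Real.sq_sqrt hc2.le]; ring
  have hP : Bpar ∈ S := hpar ▸ (S.orthogonalProjectionOnto B).2
  have hQ : Bperp ∈ Sᗮ := hperp ▸ hpar ▸ S.sub_starProjection_mem_orthogonal B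
  have hB : B = Bpar + Bperp := by rw [hperp, add_sub_cancel]
  have hp : 0 < ‖Bpar‖ := norm_pos_iff.2 hBpar
  have hμs : (1 - μ) * ‖Bpar‖ * s = c * ‖Bperp‖ := by rw [hμ]; field_simp; ring
  have hμ1 : μ ≤ 1 := hμ ▸ sub_le_self _ (by positivity)
  have hμ0 : 0 ≤ μ := by
    have hcq := mul_norm_le_mul_norm_of_mul_norm_add_le hP hQ hc0 hs.le hcs (hB ▸ hcB)
    nlinarith [mul_pos hp hs, hcq]
  have hvalue : c * ‖Bpar‖ + s * ‖Bperp‖ ≤ ‖Bpar + Bperp‖ := by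
    rw [norm_add_eq_sqrt_of_mem_orthogonal hP hQ]
    exact mul_add_mul_le_sqrt_sq_add_sq hcs _ _
  have hleast := isLeast_min_norm_mul_add_norm_sub hP hQ hc0 hs hcs hμ0 hμ1 hμs
  rw [hB, ← sInf_range, hleast.csInf_eq,
    norm_smul_sub_add_mul_eq hP hQ hs hcs hμs, min_eq_left hvalue]
end

section
/- Let E be a complex inner product space, S ⊆ E a complete linear subspace, and B ∈ E with orthogonal decomposition B = B∥ + B⊥ (B∥ ∈ S the orthogonal projection of B onto S, B⊥ = B − B∥). Let c ∈ ℝ satisfy c ≥ 0 and c·‖B‖ ≥ ‖B∥‖. Then the infimum over A ∈ S of min{‖A‖, ‖B‖}·c + ‖A − B‖ equals ‖B‖, and it is attained at A = 0. -/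
/-!
For `A ∈ S` write `P` for the orthogonal projection onto `S`. Since `⟪A, B⟫ = ⟪A, P B⟫`,
Cauchy–Schwarz gives `‖B‖² = re ⟪A, B⟫ + re ⟪B - A, B⟫ ≤ ‖A‖ ‖P B‖ + ‖A - B‖ ‖B‖`, which together
with `‖P B‖ ≤ c ‖B‖` handles `‖A‖ ≤ ‖B‖`. If `‖A‖ ≥ ‖B‖`, then `P B` being the point of `S`
nearest to `B` gives `‖B‖ ≤ ‖P B‖ + ‖B - P B‖ ≤ c ‖B‖ + ‖A - B‖`. So no `A ∈ S` beats the value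
`‖B‖` attained at `A = 0`.
-/

namespace Submodule

open RCLike

variable {𝕜 E : Type*} [RCLike 𝕜] [NormedAddCommGroup E] [InnerProductSpace 𝕜 E]
  {K : Submodule 𝕜 E} [K.HasOrthogonalProjection]

theorem norm_mul_self_le_of_mem {A : E} (hA : A ∈ K) (B : E) :
    ‖B‖ * ‖B‖ ≤ ‖A‖ * ‖K.starProjection B‖ + ‖A - B‖ * ‖B‖ := by
  have hAB : inner 𝕜 A B = inner 𝕜 A (K.starProjection B) := by
    rw [← K.inner_starProjection_left_eq_right, K.starProjection_eq_self_iff.2 hA]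
  calc ‖B‖ * ‖B‖ = re (inner 𝕜 A B) + re (inner 𝕜 (B - A) B) := by
        rw [inner_sub_left, map_sub, inner_self_eq_norm_mul_norm]
        ring
    _ ≤ ‖A‖ * ‖K.starProjection B‖ + ‖A - B‖ * ‖B‖ := by
        rw [hAB, norm_sub_rev]
        exact add_le_add (re_inner_le_norm _ _) (re_inner_le_norm _ _)

theorem norm_sub_starProjection_le_of_mem {A : E} (hA : A ∈ K) (B : E) :
    ‖B - K.starProjection B‖ ≤ ‖B - A‖ := by
  rw [starProjection_minimal]
  exact ciInf_le ⟨0, fun _ ⟨_, hx⟩ => hx ▸ norm_nonneg _⟩ (⟨A, hA⟩ : K)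

theorem norm_le_min_mul_add_norm_sub_of_mem {A : E} (hA : A ∈ K) {B : E} {c : ℝ}
    (hc : ‖K.starProjection B‖ ≤ c * ‖B‖) : ‖B‖ ≤ min ‖A‖ ‖B‖ * c + ‖A - B‖ := by
  rcases le_total ‖A‖ ‖B‖ with hAB | hBA
  · rw [min_eq_left hAB]
    rcases eq_or_ne A 0 with rfl | hA0
    · simp
    · have hB : 0 < ‖B‖ := (norm_pos_iff.2 hA0).trans_le hAB
      refine le_of_mul_le_mul_right ?_ hB
      linarith [norm_mul_self_le_of_mem hA B, mul_le_mul_of_nonneg_left hc (norm_nonneg A)]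
  · rw [min_eq_right hBA, norm_sub_rev]
    calc ‖B‖ ≤ ‖K.starProjection B‖ + ‖B - K.starProjection B‖ := norm_le_insert' _ _
      _ ≤ ‖B‖ * c + ‖B - A‖ := by
        linarith [norm_sub_starProjection_le_of_mem hA B]

theorem iInf_min_norm_mul_add_norm_sub_eq_norm {B : E} {c : ℝ}
    (hc : ‖K.starProjection B‖ ≤ c * ‖B‖) :
    ⨅ A : K, (min ‖(A : E)‖ ‖B‖ * c + ‖(A : E) - B‖) = ‖B‖ :=
  ciInf_eq_of_forall_ge_of_forall_gt_exists_lt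
    (fun A => norm_le_min_mul_add_norm_sub_of_mem A.2 hc) fun _ hw => ⟨0, by simpa using hw⟩

end Submodule

open RCLike ComplexInnerProductSpace in
theorem flat_norm_distance_to_subspace_degenerate_general
    {E : Type*} [NormedAddCommGroup E] [InnerProductSpace ℂ E]
    (S : Submodule ℂ E) [CompleteSpace S] (B : E) (c : ℝ)
    (Bpar : E)
    (hpar : Bpar = (S.orthogonalProjectionOnto B : E))
    (hcB : ‖Bpar‖ ≤ c * ‖B‖) :
    (⨅ A : S, (min ‖(A : E)‖ ‖B‖ * c + ‖(A : E) - B‖)) = ‖B‖ ∧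
    min ‖(0 : E)‖ ‖B‖ * c + ‖(0 : E) - B‖
      = (⨅ A : S, (min ‖(A : E)‖ ‖B‖ * c + ‖(A : E) - B‖)) := by
  subst hpar
  have hinf := S.iInf_min_norm_mul_add_norm_sub_eq_norm hcB
  exact ⟨hinf, by simpa using hinf.symm⟩

/-- Proposition A.1 (degenerate branch): with `Bpar` the orthogonal projection of `B`
onto the complete subspace `S`, `c ≥ 0` and `c·‖B‖ ≥ ‖Bpar‖`, the infimum over `A ∈ S`
of `min{‖A‖,‖B‖}·c + ‖A - B‖` equals `‖B‖`, and it is attained at `A = 0`. -/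
theorem flat_norm_distance_to_subspace_degenerate
    {E : Type*} [NormedAddCommGroup E] [InnerProductSpace ℂ E]
    (S : Submodule ℂ E) [CompleteSpace S] (B : E) (c : ℝ)
    (hc0 : 0 ≤ c)
    (Bpar Bperp : E)
    (hpar : Bpar = (S.orthogonalProjectionOnto B : E))
    (hperp : Bperp = B - Bpar)
    (hcB : ‖Bpar‖ ≤ c * ‖B‖) :
    (⨅ A : S, (min ‖(A : E)‖ ‖B‖ * c + ‖(A : E) - B‖)) = ‖B‖ ∧
    min ‖(0 : E)‖ ‖B‖ * c + ‖(0 : E) - B‖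
      = (⨅ A : S, (min ‖(A : E)‖ ‖B‖ * c + ‖(A : E) - B‖)) :=
  flat_norm_distance_to_subspace_degenerate_general S B c Bpar hpar hcB
end

section
/- Let E be a complex inner product space, S ⊆ E a complete linear subspace, and B ∈ E with orthogonal decomposition B = B∥ + B⊥ (B∥ ∈ S the orthogonal projection of B onto S, B⊥ = B − B∥), and assume B∥ ≠ 0. Let c ≥ 0. Then for every A ∈ S, setting μ = ‖A‖/‖B∥‖, one has ‖μ·B∥ − B‖ + c·μ·‖B∥‖ ≤ ‖A − B‖ + c·‖A‖. In particular, the infimum of A ↦ ‖A − B‖ + c·‖A‖ over S equals its infimum over the ray {μ·B∥ : μ ≥ 0}. -/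
/-!
For `A ∈ S`, the rescaled point `μ • B∥` with `μ = ‖A‖ / ‖B∥‖` has the norm of `A`, so it is at
least as close to `B∥` as `A` is: `‖μ • B∥ - B∥‖ = |‖A‖ - ‖B∥‖| ≤ ‖A - B∥‖`. Both points lie in `S`
and `B - B∥ ⊥ S`, so by Pythagoras `‖x - B‖² = ‖x - B∥‖² + ‖B⊥‖²` for `x ∈ S`, and being closer to
`B∥` means being closer to `B`. The penalty term `c‖·‖` is the same for both points.
-/

open InnerProductSpace

theorem norm_div_norm_smul_sub_le {F : Type*} [NormedAddCommGroup F] [NormedSpace ℝ F]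
    (a p : F) : ‖(‖a‖ / ‖p‖) • p - p‖ ≤ ‖a - p‖ := by
  rcases eq_or_ne p 0 with rfl | hp
  · simp
  calc ‖(‖a‖ / ‖p‖) • p - p‖ = ‖(‖a‖ / ‖p‖ - 1) • p‖ := by rw [sub_smul, one_smul]
    _ = |(‖a‖ / ‖p‖ - 1) * ‖p‖| := by rw [norm_smul, Real.norm_eq_abs, abs_mul, abs_norm]
    _ = |‖a‖ - ‖p‖| := by rw [sub_mul, one_mul, div_mul_cancel₀ _ (norm_ne_zero_iff.2 hp)]
    _ ≤ ‖a - p‖ := abs_norm_sub_norm_le a p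

namespace Submodule

variable {𝕜 E : Type*} [RCLike 𝕜] [NormedAddCommGroup E] [InnerProductSpace 𝕜 E]
  (K : Submodule 𝕜 E) [K.HasOrthogonalProjection]

theorem norm_sub_sq_eq_norm_sub_starProjection_sq_add {x : E} (hx : x ∈ K) (v : E) :
    ‖x - v‖ ^ 2 = ‖x - K.starProjection v‖ ^ 2 + ‖K.starProjection v - v‖ ^ 2 := by
  have horth : ⟪x - K.starProjection v, K.starProjection v - v⟫_𝕜 = 0 := by
    refine K.inner_right_of_mem_orthogonal (K.sub_mem hx (K.starProjection_apply_mem v)) ?_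
    simpa using Kᗮ.neg_mem (K.sub_starProjection_mem_orthogonal v)
  simp only [sq]
  rw [← norm_add_sq_eq_norm_sq_add_norm_sq_of_inner_eq_zero _ _ horth, sub_add_sub_cancel]

theorem norm_sub_le_norm_sub_of_starProjection {x y : E} (hx : x ∈ K) (hy : y ∈ K) (v : E)
    (h : ‖x - K.starProjection v‖ ≤ ‖y - K.starProjection v‖) : ‖x - v‖ ≤ ‖y - v‖ := by
  rw [← pow_le_pow_iff_left₀ (norm_nonneg _) (norm_nonneg _) two_ne_zero,
    K.norm_sub_sq_eq_norm_sub_starProjection_sq_add hx,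
    K.norm_sub_sq_eq_norm_sub_starProjection_sq_add hy]
  gcongr

theorem norm_div_norm_smul_starProjection_sub_le [NormedSpace ℝ E] [IsScalarTower ℝ 𝕜 E]
    {a : E} (ha : a ∈ K) (v : E) :
    ‖(‖a‖ / ‖K.starProjection v‖) • K.starProjection v - v‖ ≤ ‖a - v‖ :=
  K.norm_sub_le_norm_sub_of_starProjection (K.smul_of_tower_mem _ (K.starProjection_apply_mem v))
    ha v (norm_div_norm_smul_sub_le a _)

end Submodule

theorem flat_norm_reduction_to_ray_general
    {E : Type*} [NormedAddCommGroup E] [InnerProductSpace ℂ E]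
    (S : Submodule ℂ E) [CompleteSpace S] (B : E) (c : ℝ)
    (Bpar : E)
    (hpar : Bpar = (Submodule.orthogonalProjectionOnto S B : E))
    (hBpar : Bpar ≠ 0) :
    (∀ A ∈ S, ‖(‖A‖ / ‖Bpar‖) • Bpar - B‖ + c * (‖A‖ / ‖Bpar‖) * ‖Bpar‖
        ≤ ‖A - B‖ + c * ‖A‖) ∧
    (⨅ A : S, (‖(A : E) - B‖ + c * ‖(A : E)‖))
      = ⨅ μ : {t : ℝ // 0 ≤ t}, (‖(μ : ℝ) • Bpar - B‖ + c * ‖(μ : ℝ) • Bpar‖) := by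
  rw [← S.starProjection_apply] at hpar
  subst hpar
  have hscale (A : E) : ‖A‖ / ‖S.starProjection B‖ * ‖S.starProjection B‖ = ‖A‖ :=
    div_mul_cancel₀ _ (norm_ne_zero_iff.2 hBpar)
  have ray_le {A : E} (hA : A ∈ S) := S.norm_div_norm_smul_starProjection_sub_le hA B
  refine ⟨fun A hA => by rw [mul_assoc, hscale]; linarith [ray_le hA], ?_⟩
  refine csInf_eq_csInf_of_forall_exists_le ?_ ?_
  · rintro _ ⟨A, rfl⟩
    have hμ : 0 ≤ ‖(A : E)‖ / ‖S.starProjection B‖ := by positivity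
    refine ⟨_, ⟨⟨_, hμ⟩, rfl⟩, ?_⟩
    dsimp only
    rw [norm_smul, Real.norm_of_nonneg hμ, hscale]
    linarith [ray_le A.2]
  · rintro _ ⟨μ, rfl⟩
    exact ⟨_, ⟨⟨(μ : ℝ) • S.starProjection B,
      S.smul_of_tower_mem _ (S.starProjection_apply_mem B)⟩, rfl⟩, le_rfl⟩

/-- Reduction of the minimization of `A ↦ ‖A - B‖ + c·‖A‖` over the subspace `S` to the
ray `{μ·Bpar : μ ≥ 0}` spanned by the orthogonal projection `Bpar` of `B` onto `S`. -/
theorem flat_norm_reduction_to_ray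
    {E : Type*} [NormedAddCommGroup E] [InnerProductSpace ℂ E]
    (S : Submodule ℂ E) [CompleteSpace S] (B : E) (c : ℝ)
    (hc0 : 0 ≤ c)
    (Bpar Bperp : E)
    (hpar : Bpar = (Submodule.orthogonalProjectionOnto S B : E))
    (hperp : Bperp = B - Bpar)
    (hBpar : Bpar ≠ 0) :
    (∀ A ∈ S, ‖(‖A‖ / ‖Bpar‖) • Bpar - B‖ + c * (‖A‖ / ‖Bpar‖) * ‖Bpar‖
        ≤ ‖A - B‖ + c * ‖A‖) ∧
    (⨅ A : S, (‖(A : E) - B‖ + c * ‖(A : E)‖))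
      = ⨅ μ : {t : ℝ // 0 ≤ t}, (‖(μ : ℝ) • Bpar - B‖ + c * ‖(μ : ℝ) • Bpar‖) :=
  flat_norm_reduction_to_ray_general S B c Bpar hpar hBpar
end

section
/- Let a, b, c be real numbers with a > 0, b ≥ 0, 0 < c < 1, and suppose μ = 1 − (c·b)/(a·√(1 − c²)) satisfies μ ≥ 0. Then √((μ − 1)²·a² + b²) + c·μ·a = c·a + √(1 − c²)·b. Consequently, under the hypotheses of Proposition A.1 (E a complex inner product space, S ⊆ E a complete subspace, B = B∥ + B⊥ the orthogonal decomposition of B with respect to S, B∥ ≠ 0, 0 ≤ c < 1, c·‖B‖ ≤ ‖B∥‖), the infimum over A ∈ S of min{‖A‖, ‖B‖}·c + ‖A − B‖ equals c·‖B∥‖ + √(1 − c²)·‖B⊥‖. -/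
/-!
Write `B = u + v` with `u ∈ S`, `v ∈ Sᗮ`, and set `p = ‖u‖`, `b = ‖v‖`, `s = √(1 - c²)`.
For `A ∈ S` Pythagoras gives `‖A - B‖ = √(t² + b²)` with `t = ‖A - u‖`. If `‖A‖ ≤ ‖B‖` then
`c‖A‖ ≥ c(p - t)`, and Cauchy–Schwarz for the unit vector `(c, s)` gives `ct + sb ≤ √(t² + b²)`;
otherwise the cost is at least `c‖B‖ + b ≥ cp + sb`. So `cp + sb` is a lower bound, and it is
attained at `A = μ u` with `μ = 1 - cb/(ps)`, which lies in `[0, 1]` exactly when `c‖B‖ ≤ p`.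
-/

open Real

theorem mul_add_sqrt_one_sub_sq_mul_le_sqrt {c : ℝ} (hc : c ^ 2 ≤ 1) (t b : ℝ) :
    c * t + √(1 - c ^ 2) * b ≤ √(t ^ 2 + b ^ 2) := by
  have hs : √(1 - c ^ 2) ^ 2 = 1 - c ^ 2 := sq_sqrt (by linarith)
  refine (le_abs_self _).trans (abs_le_sqrt ?_)
  nlinarith [sq_nonneg (√(1 - c ^ 2) * t - c * b)]

theorem sqrt_sq_mul_add_sq_add_mul_eq {a b c μ : ℝ} (ha : a ≠ 0) (hb : 0 ≤ b) (hc : c ^ 2 < 1)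
    (hμ : μ = 1 - c * b / (a * √(1 - c ^ 2))) :
    √((μ - 1) ^ 2 * a ^ 2 + b ^ 2) + c * μ * a = c * a + √(1 - c ^ 2) * b := by
  have hs : 0 < √(1 - c ^ 2) := sqrt_pos.mpr (by linarith)
  have hs2 : √(1 - c ^ 2) ^ 2 = 1 - c ^ 2 := sq_sqrt (by linarith)
  have hsq : (μ - 1) ^ 2 * a ^ 2 + b ^ 2 = (b / √(1 - c ^ 2)) ^ 2 := by
    rw [hμ]
    field_simp
    linear_combination b ^ 2 * hs2
  rw [hsq, sqrt_sq (by positivity), hμ]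
  field_simp
  linear_combination -b * hs2

namespace Submodule

variable {𝕜 E : Type*} [RCLike 𝕜] [NormedAddCommGroup E] [InnerProductSpace 𝕜 E]
  {S : Submodule 𝕜 E} {u v : E}

theorem norm_add_eq_sqrt_of_mem_orthogonal (hu : u ∈ S) (hv : v ∈ Sᗮ) :
    ‖u + v‖ = √(‖u‖ ^ 2 + ‖v‖ ^ 2) := by
  rw [sq, sq, ← norm_add_sq_eq_norm_sq_add_norm_sq_of_inner_eq_zero u v
    (inner_right_of_mem_orthogonal hu hv), sqrt_mul_self (norm_nonneg _)]

theorem norm_le_norm_add_of_mem_orthogonal (hu : u ∈ S) (hv : v ∈ Sᗮ) : ‖u‖ ≤ ‖u + v‖ := by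
  rw [norm_add_eq_sqrt_of_mem_orthogonal hu hv]
  exact le_sqrt_of_sq_le (by nlinarith [sq_nonneg ‖v‖])

theorem norm_sub_add_eq_sqrt_of_mem_orthogonal {A : E} (hA : A ∈ S) (hu : u ∈ S) (hv : v ∈ Sᗮ) :
    ‖A - (u + v)‖ = √(‖A - u‖ ^ 2 + ‖v‖ ^ 2) := by
  rw [show A - (u + v) = (A - u) + -v by abel,
    norm_add_eq_sqrt_of_mem_orthogonal (S.sub_mem hA hu) (Sᗮ.neg_mem hv), norm_neg]

theorem mul_norm_add_le_min_mul_add_norm_sub {c : ℝ} (hc0 : 0 ≤ c) (hc1 : c ≤ 1) {A : E}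
    (hA : A ∈ S) (hu : u ∈ S) (hv : v ∈ Sᗮ) :
    c * ‖u‖ + √(1 - c ^ 2) * ‖v‖ ≤ min ‖A‖ ‖u + v‖ * c + ‖A - (u + v)‖ := by
  have hs1 : √(1 - c ^ 2) ≤ 1 := sqrt_le_one.mpr (by nlinarith)
  rw [norm_sub_add_eq_sqrt_of_mem_orthogonal hA hu hv]
  rcases le_total ‖A‖ ‖u + v‖ with h | h
  · have hA : ‖u‖ - ‖A - u‖ ≤ ‖A‖ := by
      linarith [norm_sub_norm_le u A, norm_sub_rev u A]
    have hcs := mul_add_sqrt_one_sub_sq_mul_le_sqrt (by nlinarith) ‖A - u‖ ‖v‖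
    rw [min_eq_left h]
    nlinarith [mul_le_mul_of_nonneg_left hA hc0]
  · have hvA : ‖v‖ ≤ √(‖A - u‖ ^ 2 + ‖v‖ ^ 2) :=
      le_sqrt_of_sq_le (by nlinarith [sq_nonneg ‖A - u‖])
    rw [min_eq_right h]
    nlinarith [mul_le_mul_of_nonneg_left (norm_le_norm_add_of_mem_orthogonal hu hv) hc0,
      mul_le_mul_of_nonneg_right hs1 (norm_nonneg v)]

theorem exists_min_mul_add_norm_sub_eq {c : ℝ} (hc0 : 0 ≤ c) (hc1 : c < 1) (hu : u ∈ S)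
    (hv : v ∈ Sᗮ) (hu0 : u ≠ 0) (hcB : c * ‖u + v‖ ≤ ‖u‖) :
    ∃ A ∈ S, min ‖A‖ ‖u + v‖ * c + ‖A - (u + v)‖ = c * ‖u‖ + √(1 - c ^ 2) * ‖v‖ := by
  set s := √(1 - c ^ 2)
  have hp : 0 < ‖u‖ := norm_pos_iff.mpr hu0
  have hs : 0 < s := sqrt_pos.mpr (by nlinarith)
  have hs2 : s ^ 2 = 1 - c ^ 2 := sq_sqrt (by nlinarith)
  have hcv : c * ‖v‖ ≤ ‖u‖ * s := by
    have hB2 : ‖u + v‖ ^ 2 = ‖u‖ ^ 2 + ‖v‖ ^ 2 := by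
      rw [norm_add_eq_sqrt_of_mem_orthogonal hu hv, sq_sqrt (by positivity)]
    have hcB2 : (c * ‖u + v‖) ^ 2 ≤ ‖u‖ ^ 2 := pow_le_pow_left₀ (by positivity) hcB 2
    refine (pow_le_pow_iff_left₀ (by positivity) (by positivity) two_ne_zero).mp ?_
    linear_combination hcB2 - c ^ 2 * hB2 - ‖u‖ ^ 2 * hs2
  obtain ⟨μ, hμ⟩ : ∃ μ : ℝ, μ = 1 - c * ‖v‖ / (‖u‖ * s) := ⟨_, rfl⟩
  have hμ0 : 0 ≤ μ := hμ ▸ sub_nonneg.mpr ((div_le_one (by positivity)).mpr hcv)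
  have hμ1 : μ ≤ 1 := hμ ▸ sub_le_self _ (by positivity)
  refine ⟨(μ : 𝕜) • u, S.smul_mem _ hu, ?_⟩
  have hμu : ‖(μ : 𝕜) • u‖ = μ * ‖u‖ := by
    rw [norm_smul, RCLike.norm_ofReal, abs_of_nonneg hμ0]
  have hμu_sub : ‖(μ : 𝕜) • u - u‖ = |μ - 1| * ‖u‖ := by
    rw [← RCLike.norm_ofReal (K := 𝕜), ← norm_smul, RCLike.ofReal_sub, RCLike.ofReal_one,
      sub_smul, one_smul]
  have hmin : min ‖(μ : 𝕜) • u‖ ‖u + v‖ = μ * ‖u‖ := by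
    rw [hμu, min_eq_left]
    nlinarith [norm_le_norm_add_of_mem_orthogonal hu hv]
  rw [hmin, norm_sub_add_eq_sqrt_of_mem_orthogonal (S.smul_mem _ hu) hu hv, hμu_sub, mul_pow,
    sq_abs, ← sqrt_sq_mul_add_sq_add_mul_eq hp.ne' (norm_nonneg v) (by nlinarith) hμ]
  ring

end Submodule

/-- Closed-form evaluation of the minimum value in Proposition A.1: the scalar identity
`√((μ-1)²a² + b²) + c·μ·a = c·a + √(1-c²)·b` for the optimal `μ ≥ 0`, and consequently,
under the hypotheses of Proposition A.1, the infimum over `A ∈ S` of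
`min{‖A‖,‖B‖}·c + ‖A - B‖` equals `c·‖Bpar‖ + √(1-c²)·‖Bperp‖`. -/
theorem flat_norm_distance_closed_form
    {E : Type*} [NormedAddCommGroup E] [InnerProductSpace ℂ E]
    (S : Submodule ℂ E) [CompleteSpace S] (B : E) (c : ℝ)
    (hc0 : 0 ≤ c) (hc1 : c < 1)
    (Bpar Bperp : E)
    (hpar : Bpar = (S.orthogonalProjectionOnto B : E))
    (hperp : Bperp = B - Bpar)
    (hBpar : Bpar ≠ 0)
    (hcB : c * ‖B‖ ≤ ‖Bpar‖) :
    (∀ a b c' μ : ℝ, 0 < a → 0 ≤ b → 0 < c' → c' < 1 →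
        μ = 1 - (c' * b) / (a * Real.sqrt (1 - c' ^ 2)) → 0 ≤ μ →
        Real.sqrt ((μ - 1) ^ 2 * a ^ 2 + b ^ 2) + c' * μ * a
          = c' * a + Real.sqrt (1 - c' ^ 2) * b) ∧
    (⨅ A : S, (min ‖(A : E)‖ ‖B‖ * c + ‖(A : E) - B‖))
      = c * ‖Bpar‖ + Real.sqrt (1 - c ^ 2) * ‖Bperp‖ := by
  refine ⟨fun a b c' μ ha hb hc'0 hc'1 hμ _ =>
    sqrt_sq_mul_add_sq_add_mul_eq ha.ne' hb (by nlinarith) hμ, ?_⟩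
  have hparS : Bpar ∈ S := hpar ▸ (S.orthogonalProjectionOnto B).2
  have hperpS : Bperp ∈ Sᗮ := hperp ▸ hpar ▸ S.sub_starProjection_mem_orthogonal B
  have hB : B = Bpar + Bperp := by rw [hperp, add_sub_cancel]
  rw [hB] at hcB ⊢
  obtain ⟨A₀, hA₀, hA₀_eq⟩ := S.exists_min_mul_add_norm_sub_eq hc0 hc1 hparS hperpS hBpar hcB
  exact ciInf_eq_of_forall_ge_of_forall_gt_exists_lt
    (fun A => S.mul_norm_add_le_min_mul_add_norm_sub hc0 hc1.le A.2 hparS hperpS)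
    fun w hw => ⟨⟨A₀, hA₀⟩, hA₀_eq ▸ hw⟩
end

section
/- Let a, b ∈ ℝ with a ≥ 0 and b ≥ 0, let α, β ∈ ℝ and λ > 0. Then the supremum, over all functions f : ℝ → ℝ that are Lipschitz with constant λ and satisfy |f(x)| ≤ 1 for all x ∈ ℝ, of |a·f(α) − b·f(β)|, equals min{a, b}·min{2, λ·|α − β|} + |a − b|. -/
lemma abs_min_sub_min_le_abs' (a b c : ℝ) : |min a c - min b c| ≤ |a - b| := by
  rcases le_total a c with h1 | h1 <;> rcases le_total b c with h2 | h2 <;>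
    rw [abs_le] <;> simp only [min_eq_left, min_eq_right, h1, h2] <;> constructor <;>
    linarith [neg_abs_le (a - b), le_abs_self (a - b), abs_nonneg (a - b)]

/-- Explicit flat-norm formula for the difference of two weighted Dirac measures:
the supremum of `|a·f(α) - b·f(β)|` over `λ`-Lipschitz functions `f : ℝ → ℝ` bounded by `1`
equals `min{a,b}·min{2, λ·|α-β|} + |a-b|`. -/
theorem flat_norm_of_dirac_difference
    (a b : ℝ) (ha : 0 ≤ a) (hb : 0 ≤ b) (α β l : ℝ) (hl : 0 < l) :
    sSup {y : ℝ | ∃ f : ℝ → ℝ,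
        (∀ x x' : ℝ, |f x - f x'| ≤ l * |x - x'|) ∧
        (∀ x : ℝ, |f x| ≤ 1) ∧
        y = |a * f α - b * f β|}
      = min a b * min 2 (l * |α - β|) + |a - b| := by
  set m := min 2 (l * |α - β|) with hm
  have hm0 : 0 ≤ m := le_min (by norm_num) (mul_nonneg hl.le (abs_nonneg _))
  have hm2 : m ≤ 2 := min_le_left _ _
  have hml : m ≤ l * |α - β| := min_le_right _ _
  have hub : ∀ f : ℝ → ℝ, (∀ x x' : ℝ, |f x - f x'| ≤ l * |x - x'|) →
      (∀ x : ℝ, |f x| ≤ 1) → |a * f α - b * f β| ≤ min a b * m + |a - b| := by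
    intro f hlip hbd
    have h1 : |f α - f β| ≤ m := by
      refine le_min ?_ (hlip α β)
      linarith [abs_sub (f α) (f β), hbd α, hbd β]
    have h2 := hbd α; have h3 := hbd β
    rw [abs_le] at h1 h2 h3 ⊢
    rcases le_total a b with hab | hab
    · rw [min_eq_left hab, abs_of_nonpos (by linarith : a - b ≤ 0)]
      constructor <;> nlinarith
    · rw [min_eq_right hab, abs_of_nonneg (by linarith : 0 ≤ a - b)]
      constructor <;> nlinarith
  apply le_antisymm
  · apply Real.sSup_le
    · rintro y ⟨f, hlip, hbd, rfl⟩
      exact hub f hlip hbd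
    · positivity
  · apply le_csSup
    · exact ⟨min a b * m + |a - b|, by rintro y ⟨f, hlip, hbd, rfl⟩; exact hub f hlip hbd⟩
    · rcases le_total b a with hab | hab
      · refine ⟨fun x => max (1 - l * |x - α|) (-1), ?_, ?_, ?_⟩
        · intro x x'
          refine (abs_max_sub_max_le_abs _ _ _).trans ?_
          have h : (1 - l * |x - α|) - (1 - l * |x' - α|) = l * (|x' - α| - |x - α|) := by
            ring
          rw [h, abs_mul, abs_of_pos hl]
          refine mul_le_mul_of_nonneg_left ?_ hl.le
          calc |(|x' - α| - |x - α|)| ≤ |x' - α - (x - α)| := abs_abs_sub_abs_le_abs_sub _ _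
            _ = |x - x'| := by rw [show x' - α - (x - α) = -(x - x') by ring, abs_neg]
        · intro x
          rw [abs_le]
          refine ⟨le_max_right _ _, max_le ?_ (by norm_num)⟩
          nlinarith [abs_nonneg (x - α)]
        · have hfa : max (1 - l * |α - α|) (-1 : ℝ) = 1 := by simp
          have hfb : max (1 - l * |β - α|) (-1 : ℝ) = 1 - m := by
            rw [abs_sub_comm β α]
            rcases le_total 2 (l * |α - β|) with h | h
            · rw [hm, min_eq_left h, max_eq_right (by linarith)]; norm_num
            · rw [hm, min_eq_right h, max_eq_left (by linarith)]
          simp only [hfa, hfb, min_eq_right hab, abs_of_nonneg (sub_nonneg.mpr hab)]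
          rw [abs_of_nonneg (by nlinarith)]
          ring
      · refine ⟨fun x => min (l * |x - β| - 1) 1, ?_, ?_, ?_⟩
        · intro x x'
          refine (abs_min_sub_min_le_abs' _ _ _).trans ?_
          have h : (l * |x - β| - 1) - (l * |x' - β| - 1) = l * (|x - β| - |x' - β|) := by
            ring
          rw [h, abs_mul, abs_of_pos hl]
          refine mul_le_mul_of_nonneg_left ?_ hl.le
          calc |(|x - β| - |x' - β|)| ≤ |x - β - (x' - β)| := abs_abs_sub_abs_le_abs_sub _ _
            _ = |x - x'| := by ring_nf
        · intro x
          rw [abs_le]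
          refine ⟨le_min ?_ (by norm_num), min_le_right _ _⟩
          nlinarith [abs_nonneg (x - β)]
        · have hfb : min (l * |β - β| - 1) (1 : ℝ) = -1 := by
            simp
          have hfa : min (l * |α - β| - 1) (1 : ℝ) = m - 1 := by
            rcases le_total 2 (l * |α - β|) with h | h
            · rw [hm, min_eq_left h, min_eq_right (by linarith)]; norm_num
            · rw [hm, min_eq_right h, min_eq_left (by linarith)]
          simp only [hfa, hfb, min_eq_left hab, abs_of_nonpos (sub_nonpos.mpr hab)]
          rw [abs_of_nonneg (by nlinarith)]
          ring
end
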